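/- Let c > 0, j ∈ ℤ, T > 0, and let a : [0,T] → [0,∞) be absolutely continuous with a'(t) + c·2^{2j} a(t) ≤ f(t) + g(t) for a.e. t, where f, g ∈ L²(0,T) are nonnegative. Then for 2 ≤ p ≤ ∞ and q defined by 1 + 1/p = 1/2 + 1/q, one has ‖a‖_{L^p(0,T)} ≤ ((1 − e^{−pc2^{2j}T})/(pc2^{2j}))^{1/p} a(0) + ((1 − e^{−qc2^{2j}T})/(qc2^{2j}))^{1/q} (‖f‖_{L²(0,T)} + ‖g‖_{L²(0,T)}). -/

import Mathlib

noncomputable section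
open MeasureTheory Real ENNReal Finset
open scoped ENNReal FourierTransform RealInnerProductSpace

abbrev E3 := EuclideanSpace ℝ (Fin 3)

/-- A Littlewood–Paley cutoff function on `ℝ³`. -/
structure LPCutoff where
  φ : E3 → ℝ
  smooth : ContDiff ℝ (⊤ : ℕ∞) φ
  mem_Icc : ∀ ξ, φ ξ ∈ Set.Icc (0:ℝ) 1
  supp : ∀ ξ, φ ξ ≠ 0 → 3/4 ≤ ‖ξ‖ ∧ ‖ξ‖ ≤ 8/3
  hsum : ∀ ξ : E3, ξ ≠ 0 → HasSum (fun j : ℤ => φ ((2:ℝ)^(-j) • ξ)) 1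

/-- The homogeneous dyadic block `Δ̇_j`. -/
def dblock (ψ : LPCutoff) (j : ℤ) (f : E3 → ℂ) : E3 → ℂ :=
  𝓕⁻ (fun ξ => (ψ.φ ((2:ℝ)^(-j) • ξ) : ℂ) * 𝓕 f ξ)

/-- `ℓ^r(ℤ)` norm of a sequence of extended nonnegative reals. -/
def lpSeq (r : ℝ≥0∞) (a : ℤ → ℝ≥0∞) : ℝ≥0∞ :=
  if r = ∞ then ⨆ j, a j else (∑' j, a j ^ r.toReal) ^ (1 / r.toReal)

/-- Homogeneous Besov norm `‖f‖_{Ḃ^s_{p,r}}`. -/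
def besov (ψ : LPCutoff) (s : ℝ) (p r : ℝ≥0∞) (f : E3 → ℂ) : ℝ≥0∞ :=
  lpSeq r (fun j => ENNReal.ofReal ((2:ℝ) ^ ((j : ℝ) * s)) * eLpNorm (dblock ψ j f) p volume)

/-- Homogeneous Sobolev norm `‖f‖_{Ḣ^s}` (via the Fourier transform). -/
def hNorm (s : ℝ) (f : E3 → ℂ) : ℝ≥0∞ :=
  eLpNorm (fun ξ : E3 => (‖ξ‖ ^ s : ℝ) • 𝓕 f ξ) 2 volume

/-- `i`-th component of a vector field, as a complex-valued function. -/
def comp (u : E3 → E3) (i : Fin 3) : E3 → ℂ := fun x => (u x i : ℂ)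

/-- Homogeneous Sobolev norm of a vector field. -/
def hNormV (s : ℝ) (u : E3 → E3) : ℝ≥0∞ := ∑ i : Fin 3, hNorm s (comp u i)

def pd (j : Fin 3) (f : E3 → ℝ) : E3 → ℝ :=
  fun x => fderiv ℝ f x (EuclideanSpace.single j 1)

def vcomp (u : E3 → E3) (i : Fin 3) : E3 → ℝ := fun x => u x i

def div3 (u : E3 → E3) : E3 → ℝ := fun x => ∑ j : Fin 3, pd j (vcomp u j) x

def curl3 (u : E3 → E3) : E3 → E3 := fun x =>
  WithLp.toLp 2 ![pd 1 (vcomp u 2) x - pd 2 (vcomp u 1) x,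
    pd 2 (vcomp u 0) x - pd 0 (vcomp u 2) x,
    pd 0 (vcomp u 1) x - pd 1 (vcomp u 0) x]

def cross3 (a b : E3) : E3 := WithLp.toLp 2 (crossProduct a b)

def lap3 (f : E3 → ℝ) : E3 → ℝ := fun x => ∑ j : Fin 3, pd j (pd j f) x

section AuxBMR

lemma exp_hasDeriv (b x : ℝ) : HasDerivAt (fun s => Real.exp (b*s)) (b * Real.exp (b*x)) x := by
  simpa [mul_comm] using ((hasDerivAt_id x).const_mul b).exp

lemma exp_setInt (b u v : ℝ) (huv : u ≤ v) :
    ∫ s in Set.Ioc u v, b * Real.exp (b * s) = Real.exp (b*v) - Real.exp (b*u) := by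
  rw [← intervalIntegral.integral_of_le huv]
  exact intervalIntegral.integral_eq_sub_of_hasDerivAt (fun x _ => exp_hasDeriv b x)
    (Continuous.intervalIntegrable (by continuity) u v)

lemma exp_moment (b T : ℝ) (hb : 0 < b) (hT : 0 ≤ T) :
    ∫ s in Set.Ioc 0 T, Real.exp (-(b*s)) = (1 - Real.exp (-(b*T)))/b := by
  have h := exp_setInt (-b) 0 T hT
  have h2 : ∫ s in Set.Ioc 0 T, (-b) * Real.exp (-(b * s))
      = Real.exp (-(b*T)) - 1 := by
    simpa [neg_mul] using h
  rw [MeasureTheory.integral_const_mul] at h2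
  field_simp
  linarith [h2]

lemma exp_lmoment (b T : ℝ) (hb : 0 < b) (hT : 0 ≤ T) :
    ∫⁻ s in Set.Ioc 0 T, ENNReal.ofReal (Real.exp (-(b*s)))
      = ENNReal.ofReal ((1 - Real.exp (-(b*T)))/b) := by
  rw [← exp_moment b T hb hT,
    ← MeasureTheory.ofReal_integral_eq_lintegral_ofReal]
  · exact (Continuous.integrableOn_Ioc (by continuity))
  · exact Filter.Eventually.of_forall (fun x => (Real.exp_pos _).le)


lemma fact_mul (x y : ℝ≥0∞) {pr qr : ℝ} (hpr : 2 ≤ pr) (hqr : 1 ≤ qr) (hpq : 1/qr = 1/2 + 1/pr) :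
    x * y = (x^qr * y^(2:ℝ))^(1/pr) * (x^qr)^(1/2:ℝ) * ((y^(2:ℝ))^(1/2 - 1/pr)) := by
  have hpr0 : (0:ℝ) < pr := lt_of_lt_of_le two_pos hpr
  have hqr0 : (0:ℝ) < qr := lt_of_lt_of_le one_pos hqr
  have ha1 : (0:ℝ) ≤ 1/pr := by positivity
  have ha3 : (0:ℝ) ≤ 1/2 - 1/pr := by
    have : 1/pr ≤ 1/2 := by
      apply one_div_le_one_div_of_le two_pos hpr
    linarith
  rw [ENNReal.mul_rpow_of_nonneg _ _ ha1, ← ENNReal.rpow_mul, ← ENNReal.rpow_mul,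
    ← ENNReal.rpow_mul, ← ENNReal.rpow_mul]
  rw [show ∀ a b c d : ℝ≥0∞, a*b*c*d = (a*c)*(b*d) from fun a b c d => by ring,
    ← ENNReal.rpow_add_of_nonneg _ _ (by positivity) (by positivity),
    ← ENNReal.rpow_add_of_nonneg _ _ (by positivity) (by positivity)]
  have e1 : qr * (1/pr) + qr * (1/2) = 1 := by
    have : qr * (1/qr) = 1 := by field_simp
    calc qr * (1/pr) + qr * (1/2) = qr * (1/2 + 1/pr) := by ring
    _ = qr * (1/qr) := by rw [← hpq]
    _ = 1 := this
  have e2 : 2 * (1/pr) + 2 * (1/2 - 1/pr) = 1 := by ring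
  rw [e1, e2, ENNReal.rpow_one, ENNReal.rpow_one]

lemma young_conv (κ H : ℝ → ℝ≥0∞) (hκ : Measurable κ) (hH : Measurable H)
    (hHt : ∀ τ, H τ ≠ ∞)
    {pr qr : ℝ} (hpr : 2 ≤ pr) (hqr : 1 ≤ qr) (hpq : 1/qr = 1/2 + 1/pr) :
    (∫⁻ t, (∫⁻ τ, κ (t - τ) * H τ) ^ pr) ^ (1/pr)
      ≤ (∫⁻ s, κ s ^ qr) ^ (1/qr) * (∫⁻ τ, H τ ^ (2:ℝ)) ^ (1/2 : ℝ) := by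
  have hpr0 : (0:ℝ) < pr := lt_of_lt_of_le two_pos hpr
  have hqr0 : (0:ℝ) < qr := lt_of_lt_of_le one_pos hqr
  have ha3 : (0:ℝ) ≤ 1/2 - 1/pr := by
    have : 1/pr ≤ 1/2 := one_div_le_one_div_of_le two_pos hpr
    linarith
  set A := ∫⁻ s, κ s ^ qr with hA
  set B := ∫⁻ τ, H τ ^ (2:ℝ) with hB
  have hκq : Measurable (fun s => κ s ^ qr) := hκ.pow_const qr
  have hH2 : Measurable (fun τ => H τ ^ (2:ℝ)) := hH.pow_const 2
  have hκt : ∀ t : ℝ, Measurable (fun τ => κ (t - τ)) :=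
    fun t => hκ.comp (measurable_const.sub measurable_id)
  have htransl : ∀ t : ℝ, ∫⁻ τ, κ (t - τ) ^ qr = A := by
    intro t
    exact (Measure.measurePreserving_sub_left volume t).lintegral_comp hκq
  -- trivial cases
  by_cases hA0 : A = 0
  · have hzero : ∀ t : ℝ, (∫⁻ τ, κ (t - τ) * H τ) = 0 := by
      intro t
      have h1 : (fun τ => κ (t - τ) ^ qr) =ᵐ[volume] 0 := by
        rw [← lintegral_eq_zero_iff ((hκt t).pow_const qr)]
        rw [htransl t]; exact hA0
      have h2 : (fun τ => κ (t - τ) * H τ) =ᵐ[volume] 0 := by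
        filter_upwards [h1] with τ hτ
        have : κ (t - τ) = 0 := by
          by_contra hne
          have := ENNReal.rpow_eq_zero_iff.mp hτ
          rcases this with ⟨h, _⟩ | ⟨h, hneg⟩
          · exact hne h
          · linarith
        simp [this]
      rw [lintegral_congr_ae h2]; simp
    simp only [hzero, ENNReal.zero_rpow_of_pos hpr0, lintegral_zero,
      ENNReal.zero_rpow_of_pos (by positivity : (0:ℝ) < 1/pr)]
    exact zero_le
  by_cases hB0 : B = 0
  · have hH0 : H =ᵐ[volume] 0 := by
      have h1 : (fun τ => H τ ^ (2:ℝ)) =ᵐ[volume] 0 := by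
        rw [← lintegral_eq_zero_iff hH2]; exact hB0
      filter_upwards [h1] with τ hτ
      by_contra hne
      have := ENNReal.rpow_eq_zero_iff.mp hτ
      rcases this with ⟨h, _⟩ | ⟨h, hneg⟩
      · exact hne h
      · linarith
    have hzero : ∀ t : ℝ, (∫⁻ τ, κ (t - τ) * H τ) = 0 := by
      intro t
      have h2 : (fun τ => κ (t - τ) * H τ) =ᵐ[volume] 0 := by
        filter_upwards [hH0] with τ hτ
        simp [Pi.zero_apply] at hτ
        simp [hτ]
      rw [lintegral_congr_ae h2]; simp
    simp only [hzero, ENNReal.zero_rpow_of_pos hpr0, lintegral_zero,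
      ENNReal.zero_rpow_of_pos (by positivity : (0:ℝ) < 1/pr)]
    exact zero_le
  by_cases hAt : A = ∞
  · have : A ^ (1/qr) * B ^ (1/2:ℝ) = ∞ := by
      rw [hAt, ENNReal.top_rpow_of_pos (by positivity)]
      rw [ENNReal.top_mul]
      simp only [ne_eq, ENNReal.rpow_eq_zero_iff, not_or, not_and, not_lt]
      constructor
      · intro h; exact absurd h hB0
      · intro h; norm_num
    rw [this]; exact le_top
  by_cases hBt : B = ∞
  · have : A ^ (1/qr) * B ^ (1/2:ℝ) = ∞ := by
      rw [hBt, ENNReal.top_rpow_of_pos (by norm_num)]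
      rw [ENNReal.mul_top]
      simp only [ne_eq, ENNReal.rpow_eq_zero_iff, not_or, not_and, not_lt]
      constructor
      · intro h; exact absurd h hA0
      · intro h; positivity
    rw [this]; exact le_top
  -- main case
  set G : ℝ → ℝ≥0∞ := fun t => ∫⁻ τ, κ (t - τ) ^ qr * H τ ^ (2:ℝ) with hG
  have key : ∀ t : ℝ, (∫⁻ τ, κ (t - τ) * H τ)
      ≤ (G t) ^ (1/pr) * A ^ (1/2 : ℝ) * B ^ (1/2 - 1/pr) := by
    intro t
    have hmeas : ∀ i ∈ (univ : Finset (Fin 3)), AEMeasurable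
        (![fun τ => κ (t - τ) ^ qr * H τ ^ (2:ℝ), fun τ => κ (t - τ) ^ qr,
           fun τ => H τ ^ (2:ℝ)] i) (volume : Measure ℝ) := by
      intro i _
      fin_cases i
      · exact (((hκt t).pow_const qr).mul hH2).aemeasurable
      · exact ((hκt t).pow_const qr).aemeasurable
      · exact hH2.aemeasurable
    have hsum : ∑ i : Fin 3, (![1/pr, 1/2, 1/2 - 1/pr] : Fin 3 → ℝ) i = 1 := by
      simp [Fin.sum_univ_three]; ring
    have hnn : ∀ i ∈ (univ : Finset (Fin 3)),
        (0:ℝ) ≤ (![1/pr, 1/2, 1/2 - 1/pr] : Fin 3 → ℝ) i := by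
      intro i _
      fin_cases i
      · show (0:ℝ) ≤ 1/pr; positivity
      · show (0:ℝ) ≤ 1/2; norm_num
      · show (0:ℝ) ≤ 1/2 - 1/pr; linarith
    have H3 := ENNReal.lintegral_prod_norm_pow_le (μ := (volume : Measure ℝ))
      (univ : Finset (Fin 3)) hmeas hsum hnn
    calc (∫⁻ τ, κ (t - τ) * H τ)
        = ∫⁻ τ, ∏ i : Fin 3,
            (![fun τ => κ (t - τ) ^ qr * H τ ^ (2:ℝ), fun τ => κ (t - τ) ^ qr,
               fun τ => H τ ^ (2:ℝ)] i) τ ^ ((![1/pr, 1/2, 1/2 - 1/pr] : Fin 3 → ℝ) i) := by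
          congr 1; funext τ
          rw [Fin.prod_univ_three]
          simpa using fact_mul (κ (t - τ)) (H τ) hpr hqr hpq
      _ ≤ ∏ i : Fin 3, (∫⁻ τ, (![fun τ => κ (t - τ) ^ qr * H τ ^ (2:ℝ),
               fun τ => κ (t - τ) ^ qr, fun τ => H τ ^ (2:ℝ)] i) τ)
                 ^ ((![1/pr, 1/2, 1/2 - 1/pr] : Fin 3 → ℝ) i) := H3
      _ = (G t) ^ (1/pr) * A ^ (1/2 : ℝ) * B ^ (1/2 - 1/pr) := by
          rw [Fin.prod_univ_three]
          simp only [Matrix.cons_val_zero, Matrix.cons_val_one, Matrix.head_cons,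
            Matrix.cons_val_two, Matrix.tail_cons]
          rw [htransl t]
  -- integrate the pointwise bound
  set c1 : ℝ := (1/2) * pr with hc1
  set c2 : ℝ := (1/2 - 1/pr) * pr with hc2
  have hc1n : (0:ℝ) ≤ c1 := by positivity
  have hc2n : (0:ℝ) ≤ c2 := by rw [hc2]; positivity
  set Cst : ℝ≥0∞ := A ^ c1 * B ^ c2 with hCst
  have hCstt : Cst ≠ ∞ :=
    ENNReal.mul_ne_top (ENNReal.rpow_ne_top_of_nonneg hc1n hAt)
      (ENNReal.rpow_ne_top_of_nonneg hc2n hBt)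
  have hFp : ∀ t : ℝ, (∫⁻ τ, κ (t - τ) * H τ) ^ pr ≤ G t * Cst := by
    intro t
    calc (∫⁻ τ, κ (t - τ) * H τ) ^ pr
        ≤ ((G t) ^ (1/pr) * A ^ (1/2 : ℝ) * B ^ (1/2 - 1/pr)) ^ pr :=
          ENNReal.rpow_le_rpow (key t) hpr0.le
      _ = G t * Cst := by
          rw [ENNReal.mul_rpow_of_nonneg _ _ hpr0.le, ENNReal.mul_rpow_of_nonneg _ _ hpr0.le,
            ← ENNReal.rpow_mul, ← ENNReal.rpow_mul, ← ENNReal.rpow_mul,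
            one_div_mul_cancel hpr0.ne', ENNReal.rpow_one, hCst, mul_assoc]
  have hGint : ∫⁻ t, G t = B * A := by
    rw [hG]
    rw [lintegral_lintegral_swap]
    · have inner : ∀ τ : ℝ, ∫⁻ t, κ (t - τ) ^ qr * H τ ^ (2:ℝ) = H τ ^ (2:ℝ) * A := by
        intro τ
        rw [lintegral_mul_const' (H τ ^ (2:ℝ)) _ (ENNReal.rpow_ne_top_of_nonneg (by norm_num) (hHt τ))]
        rw [show (fun t => κ (t - τ) ^ qr) = (fun s => κ s ^ qr) ∘ (fun t => t - τ) from rfl]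
        rw [show ∫⁻ t, ((fun s => κ s ^ qr) ∘ (fun t => t - τ)) t = ∫⁻ s, κ s ^ qr from
          lintegral_sub_right_eq_self (fun s => κ s ^ qr) τ]
        rw [mul_comm]
      simp_rw [inner]
      rw [lintegral_mul_const' A _ hAt]
    · exact (((hκ.comp (measurable_fst.sub measurable_snd)).pow_const qr).mul
        (hH2.comp measurable_snd)).aemeasurable
  calc (∫⁻ t, (∫⁻ τ, κ (t - τ) * H τ) ^ pr) ^ (1/pr)
      ≤ (∫⁻ t, G t * Cst) ^ (1/pr) := by
        apply ENNReal.rpow_le_rpow _ (by positivity)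
        exact lintegral_mono hFp
    _ = ((B * A) * Cst) ^ (1/pr) := by
        rw [lintegral_mul_const' Cst _ hCstt, hGint]
    _ = A ^ (1/qr) * B ^ (1/2 : ℝ) := by
        have e0 : (B * A) * Cst = A ^ ((1:ℝ)+c1) * B ^ ((1:ℝ)+c2) := by
          rw [ENNReal.rpow_add 1 c1 hA0 hAt, ENNReal.rpow_add 1 c2 hB0 hBt,
            ENNReal.rpow_one, ENNReal.rpow_one, hCst]
          ring
        rw [e0, ENNReal.mul_rpow_of_nonneg _ _ (by positivity), ← ENNReal.rpow_mul,
          ← ENNReal.rpow_mul]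
        congr 1
        · congr 1
          rw [hc1, hpq]
          field_simp
          ring
        · congr 1
          rw [hc2]
          field_simp
          ring


lemma exp_hasDeriv' (b x : ℝ) : HasDerivAt (fun s => Real.exp (b*s)) (b * Real.exp (b*x)) x := by
  simpa [mul_comm] using ((hasDerivAt_id x).const_mul b).exp

lemma exp_setInt' (b u v : ℝ) (huv : u ≤ v) :
    ∫ s in Set.Ioc u v, b * Real.exp (b * s) = Real.exp (b*v) - Real.exp (b*u) := by
  rw [← intervalIntegral.integral_of_le huv]
  exact intervalIntegral.integral_eq_sub_of_hasDerivAt (fun x _ => exp_hasDeriv' b x)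
    (Continuous.intervalIntegrable (by continuity) u v)

lemma duhamel_key (l t : ℝ) (hl : 0 < l) (ht : 0 < t) (a' : ℝ → ℝ)
    (hint : IntegrableOn a' (Set.Ioc 0 t)) :
    ∫ τ in Set.Ioc 0 t, (l * Real.exp (l*τ)) * (∫ s in Set.Ioc 0 τ, a' s)
      = Real.exp (l*t) * (∫ τ in Set.Ioc 0 t, a' τ)
        - ∫ τ in Set.Ioc 0 t, Real.exp (l*τ) * a' τ := by
  set ν := volume.restrict (Set.Ioc 0 t) with hν
  set Φ : ℝ → ℝ → ℝ := fun s τ =>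
    Set.indicator (Set.Ioc 0 s) a' τ * (l * Real.exp (l*s)) with hΦ
  have hS : MeasurableSet {p : ℝ × ℝ | p.2 ∈ Set.Ioc 0 p.1} := by
    apply MeasurableSet.inter
    · exact measurableSet_lt measurable_const measurable_snd
    · exact measurableSet_le measurable_snd measurable_fst
  have hmeas : AEStronglyMeasurable (Function.uncurry Φ) (ν.prod ν) := by
    have h1 : AEStronglyMeasurable (fun p : ℝ × ℝ => a' p.2) (ν.prod ν) :=
      hint.aestronglyMeasurable.comp_snd
    have h2 : Function.uncurry Φ = fun p : ℝ × ℝ =>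
        Set.indicator {p : ℝ × ℝ | p.2 ∈ Set.Ioc 0 p.1} (fun p => a' p.2) p
          * (l * Real.exp (l * p.1)) := by
      funext p
      simp only [Function.uncurry, hΦ, Set.indicator_apply, Set.mem_setOf_eq]
    rw [h2]
    exact (h1.indicator hS).mul ((Continuous.aestronglyMeasurable (by continuity)))
  have hfst : ∀ᵐ p : ℝ × ℝ ∂(ν.prod ν), p.1 ∈ Set.Ioc 0 t := by
    rw [MeasureTheory.ae_iff]
    have hset : {p : ℝ × ℝ | p.1 ∉ Set.Ioc 0 t} = (Set.Ioc 0 t)ᶜ ×ˢ Set.univ := by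
      ext p; simp
    rw [hset, Measure.prod_prod, hν,
      Measure.restrict_apply (measurableSet_Ioc.compl)]
    simp
  have hdom : Integrable (fun p : ℝ × ℝ => (l * Real.exp (l*t)) * |a' p.2|) (ν.prod ν) := by
    have : Integrable (fun _ : ℝ => l * Real.exp (l*t)) ν := integrable_const _
    exact this.mul_prod hint.abs
  have hΦint : Integrable (Function.uncurry Φ) (ν.prod ν) := by
    apply Integrable.mono' hdom hmeas
    filter_upwards [hfst] with p hp
    simp only [Function.uncurry, hΦ]
    have h1 : |Set.indicator (Set.Ioc 0 p.1) a' p.2| ≤ |a' p.2| := by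
      by_cases h : p.2 ∈ Set.Ioc 0 p.1 <;> simp [Set.indicator_apply, h, abs_nonneg]
    have h2 : |l * Real.exp (l * p.1)| ≤ l * Real.exp (l*t) := by
      rw [abs_of_nonneg (by positivity)]
      have := Real.exp_le_exp.mpr (mul_le_mul_of_nonneg_left hp.2 hl.le)
      nlinarith [this, hl]
    calc ‖Set.indicator (Set.Ioc 0 p.1) a' p.2 * (l * Real.exp (l * p.1))‖
        = |Set.indicator (Set.Ioc 0 p.1) a' p.2| * |l * Real.exp (l * p.1)| := by
          rw [Real.norm_eq_abs, abs_mul]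
      _ ≤ |a' p.2| * (l * Real.exp (l*t)) :=
          mul_le_mul h1 h2 (abs_nonneg _) (abs_nonneg _)
      _ = l * Real.exp (l*t) * |a' p.2| := by ring
  have hEa' : IntegrableOn (fun τ => Real.exp (l*τ) * a' τ) (Set.Ioc 0 t) := by
    apply Integrable.mono' (hint.abs.const_mul (Real.exp (l*t)))
    · exact (Continuous.aestronglyMeasurable (by continuity)).mul hint.aestronglyMeasurable
    · filter_upwards [ae_restrict_mem measurableSet_Ioc] with τ hτ
      rw [Real.norm_eq_abs, abs_mul, abs_of_nonneg (Real.exp_pos _).le]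
      exact mul_le_mul_of_nonneg_right
        (Real.exp_le_exp.mpr (mul_le_mul_of_nonneg_left hτ.2 hl.le)) (abs_nonneg _)
  have hLHS : ∫ s in Set.Ioc 0 t, (l * Real.exp (l*s)) * (∫ u in Set.Ioc 0 s, a' u)
      = ∫ s in Set.Ioc 0 t, (∫ τ in Set.Ioc 0 t, Φ s τ) := by
    apply setIntegral_congr_fun measurableSet_Ioc
    intro s hs
    show (l * Real.exp (l*s)) * (∫ u in Set.Ioc 0 s, a' u) = ∫ τ in Set.Ioc 0 t, Φ s τ
    have : ∫ τ in Set.Ioc 0 t, Φ s τ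
        = (∫ τ in Set.Ioc 0 t, Set.indicator (Set.Ioc 0 s) a' τ) * (l * Real.exp (l*s)) :=
      MeasureTheory.integral_mul_const _ _
    rw [this, setIntegral_indicator measurableSet_Ioc]
    have hset : Set.Ioc 0 t ∩ Set.Ioc 0 s = Set.Ioc 0 s := by
      rw [Set.Ioc_inter_Ioc]
      simp [min_eq_right hs.2]
    rw [hset, mul_comm]
  have hswap : ∫ s in Set.Ioc 0 t, (∫ τ in Set.Ioc 0 t, Φ s τ)
      = ∫ τ in Set.Ioc 0 t, (∫ s in Set.Ioc 0 t, Φ s τ) :=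
    integral_integral_swap hΦint
  have hinner : ∀ τ ∈ Set.Ioc 0 t, (∫ s in Set.Ioc 0 t, Φ s τ)
      = a' τ * (Real.exp (l*t) - Real.exp (l*τ)) := by
    intro τ hτ
    have hEq : ∀ s, Φ s τ = Set.indicator (Set.Ici τ)
        (fun s => a' τ * (l * Real.exp (l*s))) s := by
      intro s
      simp only [hΦ, Set.indicator_apply, Set.mem_Ioc, Set.mem_Ici]
      by_cases h : τ ≤ s
      · simp [h, hτ.1]
      · simp [h]
    simp_rw [hEq]
    rw [setIntegral_indicator measurableSet_Ici]
    have hset2 : Set.Ioc 0 t ∩ Set.Ici τ = Set.Icc τ t := by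
      ext s
      simp only [Set.mem_inter_iff, Set.mem_Ioc, Set.mem_Ici, Set.mem_Icc]
      constructor
      · rintro ⟨⟨_, h2⟩, h3⟩; exact ⟨h3, h2⟩
      · rintro ⟨h1, h2⟩; exact ⟨⟨lt_of_lt_of_le hτ.1 h1, h2⟩, h1⟩
    rw [hset2, MeasureTheory.integral_Icc_eq_integral_Ioc,
      MeasureTheory.integral_const_mul, exp_setInt' l τ t hτ.2]
  have hstep5 : ∫ τ in Set.Ioc 0 t, (∫ s in Set.Ioc 0 t, Φ s τ)
      = Real.exp (l*t) * (∫ τ in Set.Ioc 0 t, a' τ)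
        - ∫ τ in Set.Ioc 0 t, Real.exp (l*τ) * a' τ := by
    rw [setIntegral_congr_fun measurableSet_Ioc hinner]
    have expand : ∀ τ : ℝ, a' τ * (Real.exp (l*t) - Real.exp (l*τ))
        = a' τ * Real.exp (l*t) - Real.exp (l*τ) * a' τ := fun τ => by ring
    simp_rw [expand]
    rw [MeasureTheory.integral_sub (hint.mul_const _) hEa',
      MeasureTheory.integral_mul_const, mul_comm]
  rw [hLHS, hswap, hstep5]

lemma contE (l : ℝ) : Continuous (fun τ : ℝ => Real.exp (l*τ)) :=
  Real.continuous_exp.comp (continuous_const.mul continuous_id)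

lemma duhamel (l T : ℝ) (hl : 0 < l) (hT : 0 < T) (a a' h : ℝ → ℝ)
    (hint : IntervalIntegrable a' volume 0 T)
    (hAC : ∀ t ∈ Set.Icc 0 T, a t = a 0 + ∫ τ in (0:ℝ)..t, a' τ)
    (hh : IntegrableOn h (Set.Ioc 0 T))
    (hode : ∀ᵐ t ∂(volume.restrict (Set.Ioc 0 T)), a' t + l * a t ≤ h t) :
    ∀ t ∈ Set.Ioc 0 T, a t ≤ Real.exp (-(l*t)) * a 0
      + ∫ τ in Set.Ioc 0 t, Real.exp (-(l*(t-τ))) * h τ := by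
  intro t ht
  have h0t : (0:ℝ) < t := ht.1
  have htT : t ≤ T := ht.2
  have hint_t : IntegrableOn a' (Set.Ioc 0 t) :=
    ((intervalIntegrable_iff_integrableOn_Ioc_of_le hT.le).mp hint).mono_set
      (Set.Ioc_subset_Ioc le_rfl htT)
  set A : ℝ → ℝ := fun τ => ∫ s in Set.Ioc 0 τ, a' s with hA
  have haA : ∀ τ ∈ Set.Icc 0 T, a τ = a 0 + A τ := by
    intro τ hτ
    rw [hAC τ hτ, hA, intervalIntegral.integral_of_le hτ.1]
  have hAcont : ContinuousOn A (Set.Icc 0 t) := by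
    have hi : IntegrableOn a' (Set.Icc 0 t) := by
      rwa [integrableOn_Icc_iff_integrableOn_Ioc]
    exact intervalIntegral.continuousOn_primitive hi
  have hAint : IntegrableOn A (Set.Ioc 0 t) :=
    (hAcont.integrableOn_Icc).mono_set Set.Ioc_subset_Icc_self
  have hEa' : IntegrableOn (fun τ => Real.exp (l*τ) * a' τ) (Set.Ioc 0 t) := by
    apply Integrable.mono' (hint_t.abs.const_mul (Real.exp (l*t)))
    · exact ((contE l).aestronglyMeasurable).mul hint_t.aestronglyMeasurable
    · filter_upwards [ae_restrict_mem measurableSet_Ioc] with τ hτ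
      rw [Real.norm_eq_abs, abs_mul, abs_of_nonneg (Real.exp_pos _).le]
      exact mul_le_mul_of_nonneg_right
        (Real.exp_le_exp.mpr (mul_le_mul_of_nonneg_left hτ.2 hl.le)) (abs_nonneg _)
  have hEA : IntegrableOn (fun τ => (l * Real.exp (l*τ)) * A τ) (Set.Ioc 0 t) := by
    apply Integrable.mono' (hAint.abs.const_mul (l * Real.exp (l*t)))
    · exact ((continuous_const.mul (contE l)).aestronglyMeasurable).mul hAint.aestronglyMeasurable
    · filter_upwards [ae_restrict_mem measurableSet_Ioc] with τ hτ
      rw [Real.norm_eq_abs, abs_mul, abs_of_nonneg (by positivity : (0:ℝ) ≤ l * Real.exp (l*τ))]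
      apply mul_le_mul_of_nonneg_right _ (abs_nonneg _)
      exact mul_le_mul_of_nonneg_left
        (Real.exp_le_exp.mpr (mul_le_mul_of_nonneg_left hτ.2 hl.le)) hl.le
  have hEh : IntegrableOn (fun τ => Real.exp (l*τ) * h τ) (Set.Ioc 0 t) := by
    have hh_t : IntegrableOn h (Set.Ioc 0 t) := hh.mono_set (Set.Ioc_subset_Ioc le_rfl htT)
    apply Integrable.mono' (hh_t.abs.const_mul (Real.exp (l*t)))
    · exact ((contE l).aestronglyMeasurable).mul hh_t.aestronglyMeasurable
    · filter_upwards [ae_restrict_mem measurableSet_Ioc] with τ hτ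
      rw [Real.norm_eq_abs, abs_mul, abs_of_nonneg (Real.exp_pos _).le]
      exact mul_le_mul_of_nonneg_right
        (Real.exp_le_exp.mpr (mul_le_mul_of_nonneg_left hτ.2 hl.le)) (abs_nonneg _)
  have hEa0 : IntegrableOn (fun τ => (l * Real.exp (l*τ)) * a 0) (Set.Ioc 0 t) :=
    Continuous.integrableOn_Ioc ((continuous_const.mul (contE l)).mul continuous_const)
  have hkey : ∫ τ in Set.Ioc 0 t, Real.exp (l*τ) * (a' τ + l * a τ)
      = Real.exp (l*t) * a t - a 0 := by
    have hcongr : ∫ τ in Set.Ioc 0 t, Real.exp (l*τ) * (a' τ + l * a τ)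
        = ∫ τ in Set.Ioc 0 t, (Real.exp (l*τ) * a' τ
            + ((l * Real.exp (l*τ)) * a 0 + (l * Real.exp (l*τ)) * A τ)) := by
      apply setIntegral_congr_fun measurableSet_Ioc
      intro τ hτ
      have := haA τ ⟨hτ.1.le, le_trans hτ.2 htT⟩
      simp only [this]; ring
    have hsum2 : IntegrableOn
        (fun τ => (l * Real.exp (l*τ)) * a 0 + (l * Real.exp (l*τ)) * A τ)
        (Set.Ioc 0 t) := hEa0.add hEA
    rw [hcongr, MeasureTheory.integral_add hEa' hsum2,
      MeasureTheory.integral_add hEa0 hEA]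
    have e1 : ∫ τ in Set.Ioc 0 t, (l * Real.exp (l*τ)) * a 0
        = (Real.exp (l*t) - 1) * a 0 := by
      rw [MeasureTheory.integral_mul_const, exp_setInt' l 0 t h0t.le]
      simp
    have e2 := duhamel_key l t hl h0t a' hint_t
    rw [e1, e2]
    have := haA t ⟨h0t.le, htT⟩
    rw [this, hA]
    ring
  have hode_t : ∀ᵐ τ ∂(volume.restrict (Set.Ioc 0 t)), a' τ + l * a τ ≤ h τ :=
    ae_restrict_of_ae_restrict_of_subset (Set.Ioc_subset_Ioc le_rfl htT) hode
  have hsum_int : IntegrableOn (fun τ => Real.exp (l*τ) * (a' τ + l * a τ)) (Set.Ioc 0 t) := by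
    apply Integrable.congr ((hEa'.add (hEa0.add hEA)))
    filter_upwards [ae_restrict_mem measurableSet_Ioc] with τ hτ
    have := haA τ ⟨hτ.1.le, le_trans hτ.2 htT⟩
    simp only [Pi.add_apply, this]; ring
  have hmono : ∫ τ in Set.Ioc 0 t, Real.exp (l*τ) * (a' τ + l * a τ)
      ≤ ∫ τ in Set.Ioc 0 t, Real.exp (l*τ) * h τ := by
    apply MeasureTheory.integral_mono_ae hsum_int hEh
    filter_upwards [hode_t] with τ hτ
    exact mul_le_mul_of_nonneg_left hτ (Real.exp_pos _).le
  have hbound : Real.exp (l*t) * a t ≤ a 0 + ∫ τ in Set.Ioc 0 t, Real.exp (l*τ) * h τ := by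
    rw [hkey] at hmono; linarith
  have hEt : Real.exp (-(l*t)) * (Real.exp (l*t) * a t) = a t := by
    rw [← mul_assoc, ← Real.exp_add]; simp
  calc a t = Real.exp (-(l*t)) * (Real.exp (l*t) * a t) := hEt.symm
    _ ≤ Real.exp (-(l*t)) * (a 0 + ∫ τ in Set.Ioc 0 t, Real.exp (l*τ) * h τ) :=
        mul_le_mul_of_nonneg_left hbound (Real.exp_pos _).le
    _ = Real.exp (-(l*t)) * a 0 + ∫ τ in Set.Ioc 0 t, Real.exp (-(l*(t-τ))) * h τ := by
        rw [mul_add]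
        congr 1
        rw [← MeasureTheory.integral_const_mul]
        apply setIntegral_congr_fun measurableSet_Ioc
        intro τ _
        show Real.exp (-(l*t)) * (Real.exp (l*τ) * h τ) = Real.exp (-(l*(t-τ))) * h τ
        rw [← mul_assoc, ← Real.exp_add]
        have harg : -(l*t) + l*τ = -(l*(t-τ)) := by ring
        rw [harg]


end AuxBMR

/-- Maximal-regularity estimate for a single Littlewood–Paley block: if
`a' + c 2^{2j} a ≤ f + g` a.e. on `(0,T)` and `1 + 1/p = 1/2 + 1/q`, `2 ≤ p`, then
`‖a‖_{L^p(0,T)} ≤ ((1-e^{-pc2^{2j}T})/(pc2^{2j}))^{1/p} a(0)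
  + ((1-e^{-qc2^{2j}T})/(qc2^{2j}))^{1/q} (‖f‖_{L²(0,T)} + ‖g‖_{L²(0,T)})`. -/
theorem block_maximal_regularity (c T : ℝ) (j : ℤ) (a a' f g : ℝ → ℝ)
    (hc : 0 < c) (hT : 0 < T)
    (ha_nonneg : ∀ t ∈ Set.Icc 0 T, 0 ≤ a t)
    (hint : IntervalIntegrable a' MeasureTheory.volume 0 T)
    (hAC : ∀ t ∈ Set.Icc 0 T, a t = a 0 + ∫ τ in (0:ℝ)..t, a' τ)
    (hf_nonneg : ∀ t, 0 ≤ f t) (hg_nonneg : ∀ t, 0 ≤ g t)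
    (hf : MeasureTheory.MemLp f 2 (volume.restrict (Set.Ioc 0 T)))
    (hg : MeasureTheory.MemLp g 2 (volume.restrict (Set.Ioc 0 T)))
    (hode : ∀ᵐ t ∂(volume.restrict (Set.Ioc 0 T)),
      a' t + c * (2:ℝ)^(2*j) * a t ≤ f t + g t)
    (p q : ℝ≥0∞) (hp : 2 ≤ p) (hpq : 1 + 1/p = 1/2 + 1/q) :
    eLpNorm a p (volume.restrict (Set.Ioc 0 T)) ≤
      ENNReal.ofReal
        (((1 - Real.exp (-(p.toReal * c * (2:ℝ)^(2*j) * T))) /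
            (p.toReal * c * (2:ℝ)^(2*j))) ^ (1 / p.toReal) * a 0)
      + ENNReal.ofReal
        (((1 - Real.exp (-(q.toReal * c * (2:ℝ)^(2*j) * T))) /
            (q.toReal * c * (2:ℝ)^(2*j))) ^ (1 / q.toReal)) *
        (eLpNorm f 2 (volume.restrict (Set.Ioc 0 T))
          + eLpNorm g 2 (volume.restrict (Set.Ioc 0 T))) := by
  have hl : 0 < c * (2:ℝ)^(2*j) := mul_pos hc (zpow_pos two_pos _)
  set l : ℝ := c * (2:ℝ)^(2*j) with hldef
  set μT := volume.restrict (Set.Ioc (0:ℝ) T) with hμT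
  -- exponent bookkeeping
  have hq_inv : 1/q = 1/2 + 1/p := by
    apply (ENNReal.add_right_inj (show (1/2:ℝ≥0∞) ≠ ∞ by norm_num)).mp
    rw [← hpq, ← add_assoc, ENNReal.add_halves]
  have hp0 : p ≠ 0 := by
    intro h; rw [h] at hp; exact absurd hp (by norm_num)
  have hq1 : 1 ≤ q := by
    have h1 : 1/q ≤ 1 := by
      rw [hq_inv]
      have h3 : 1/p ≤ 1/2 := by
        simp only [one_div]
        exact ENNReal.inv_le_inv.mpr hp
      calc 1/2 + 1/p ≤ 1/2 + 1/2 := add_le_add_right h3 _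
        _ = 1 := ENNReal.add_halves 1
    rw [one_div] at h1
    exact ENNReal.inv_le_one.mp h1
  have hq2 : q ≤ 2 := by
    have h1 : 1/2 ≤ 1/q := by rw [hq_inv]; exact le_self_add
    simp only [one_div] at h1
    exact ENNReal.inv_le_inv.mp h1
  have hq0 : q ≠ 0 := fun h => by rw [h] at hq1; exact absurd hq1 (by norm_num)
  have hqtop : q ≠ ∞ := fun h => by rw [h] at hq2; exact absurd hq2 (by norm_num)
  have hqr1 : 1 ≤ q.toReal := by
    have := ENNReal.toReal_mono hqtop hq1
    simpa using this
  have ha0 : 0 ≤ a 0 := ha_nonneg 0 ⟨le_rfl, hT.le⟩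
  -- the forcing term
  have hhnn : ∀ τ : ℝ, 0 ≤ f τ + g τ := fun τ => add_nonneg (hf_nonneg τ) (hg_nonneg τ)
  have hh2 : MemLp (fun t => f t + g t) 2 μT := hf.add hg
  have hh1 : IntegrableOn (fun t => f t + g t) (Set.Ioc 0 T) volume := by
    have := hh2.integrable (by norm_num : (1:ℝ≥0∞) ≤ 2)
    exact this
  have hode' : ∀ᵐ t ∂μT, a' t + l * a t ≤ f t + g t := hode
  have hDuh := duhamel l T hl hT a a' (fun t => f t + g t) hint hAC hh1 hode'
  obtain ⟨h', h'sm, h'ae⟩ := hh2.aestronglyMeasurable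
  set κ : ℝ → ℝ≥0∞ :=
    Set.indicator (Set.Icc 0 T) (fun s => ENNReal.ofReal (Real.exp (-(l*s)))) with hκdef
  set H : ℝ → ℝ≥0∞ :=
    Set.indicator (Set.Ioc 0 T) (fun τ => ENNReal.ofReal (h' τ)) with hHdef
  have hKcont : Continuous (fun s : ℝ => Real.exp (-(l*s))) :=
    Real.continuous_exp.comp (continuous_const.mul continuous_id).neg
  have hκm : Measurable κ :=
    (ENNReal.measurable_ofReal.comp hKcont.measurable).indicator measurableSet_Icc
  have hHm : Measurable H :=
    (ENNReal.measurable_ofReal.comp h'sm.measurable).indicator measurableSet_Ioc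
  have hHt : ∀ τ, H τ ≠ ∞ := by
    intro τ
    rw [hHdef]
    simp only [Set.indicator_apply]
    split <;> simp
  -- pointwise bound in ℝ≥0∞
  have hptwise : ∀ t ∈ Set.Ioc (0:ℝ) T, ENNReal.ofReal (a t) ≤
      ENNReal.ofReal (Real.exp (-(l*t)) * a 0) + ∫⁻ τ, κ (t - τ) * H τ := by
    intro t ht
    have hD := hDuh t ht
    have hh_t : IntegrableOn (fun τ => f τ + g τ) (Set.Ioc 0 t) volume :=
      hh1.mono_set (Set.Ioc_subset_Ioc le_rfl ht.2)
    have hcont2 : Continuous (fun τ : ℝ => Real.exp (-(l*(t-τ)))) :=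
      Real.continuous_exp.comp ((continuous_const.mul (continuous_const.sub continuous_id)).neg)
    have hKint : IntegrableOn (fun τ => Real.exp (-(l*(t-τ))) * (f τ + g τ))
        (Set.Ioc 0 t) volume := by
      apply Integrable.mono' hh_t.abs
      · exact hcont2.aestronglyMeasurable.mul hh_t.aestronglyMeasurable
      · filter_upwards [ae_restrict_mem measurableSet_Ioc] with τ hτ
        rw [Real.norm_eq_abs, abs_mul, abs_of_nonneg (Real.exp_pos _).le,
          abs_of_nonneg (hhnn τ)]
        have hexp : Real.exp (-(l*(t-τ))) ≤ 1 := by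
          rw [Real.exp_le_one_iff]
          have : 0 ≤ l * (t - τ) := mul_nonneg hl.le (sub_nonneg.mpr hτ.2)
          linarith
        exact mul_le_of_le_one_left (hhnn τ) hexp
    have heq1 : ENNReal.ofReal (∫ τ in Set.Ioc 0 t, Real.exp (-(l*(t-τ))) * (f τ + g τ))
        = ∫⁻ τ in Set.Ioc 0 t, ENNReal.ofReal (Real.exp (-(l*(t-τ))) * (f τ + g τ)) :=
      ofReal_integral_eq_lintegral_ofReal hKint
        (Filter.Eventually.of_forall fun τ => mul_nonneg (Real.exp_pos _).le (hhnn τ))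
    have heq2 : ∫⁻ τ in Set.Ioc 0 t, ENNReal.ofReal (Real.exp (-(l*(t-τ))) * (f τ + g τ))
        = ∫⁻ τ in Set.Ioc 0 t, κ (t - τ) * H τ := by
      have hsub : ∀ᵐ τ ∂(volume.restrict (Set.Ioc 0 t)), f τ + g τ = h' τ := by
        have : (fun τ => f τ + g τ) =ᵐ[volume.restrict (Set.Ioc 0 t)] h' :=
          ae_restrict_of_ae_restrict_of_subset (Set.Ioc_subset_Ioc le_rfl ht.2) h'ae
        exact this
      apply lintegral_congr_ae
      filter_upwards [hsub, ae_restrict_mem measurableSet_Ioc] with τ hτ1 hτ2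
      rw [ENNReal.ofReal_mul (Real.exp_pos _).le, hτ1]
      have hmem1 : t - τ ∈ Set.Icc (0:ℝ) T :=
        ⟨sub_nonneg.mpr hτ2.2, by
          have := hτ2.1
          have := ht.2
          linarith⟩
      have hmem2 : τ ∈ Set.Ioc (0:ℝ) T := ⟨hτ2.1, le_trans hτ2.2 ht.2⟩
      rw [hκdef, hHdef, Set.indicator_of_mem hmem1, Set.indicator_of_mem hmem2]
    calc ENNReal.ofReal (a t)
        ≤ ENNReal.ofReal (Real.exp (-(l*t)) * a 0
            + ∫ τ in Set.Ioc 0 t, Real.exp (-(l*(t-τ))) * (f τ + g τ)) :=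
          ENNReal.ofReal_le_ofReal hD
      _ ≤ ENNReal.ofReal (Real.exp (-(l*t)) * a 0)
            + ENNReal.ofReal (∫ τ in Set.Ioc 0 t, Real.exp (-(l*(t-τ))) * (f τ + g τ)) :=
          ENNReal.ofReal_add_le
      _ = ENNReal.ofReal (Real.exp (-(l*t)) * a 0) + ∫⁻ τ in Set.Ioc 0 t, κ (t - τ) * H τ := by
          rw [heq1, heq2]
      _ ≤ ENNReal.ofReal (Real.exp (-(l*t)) * a 0) + ∫⁻ τ, κ (t - τ) * H τ := by
          exact add_le_add_right (lintegral_mono' Measure.restrict_le_self le_rfl) _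
  -- kernel norms
  have hcoef : ∀ r : ℝ, 0 < r → (∫⁻ s, κ s ^ r)
      = ENNReal.ofReal ((1 - Real.exp (-(r*l*T)))/(r*l)) := by
    intro r hr
    have hpt : ∀ s, κ s ^ r
        = Set.indicator (Set.Icc 0 T) (fun s => ENNReal.ofReal (Real.exp (-(r*l*s)))) s := by
      intro s
      rw [hκdef]
      by_cases hs : s ∈ Set.Icc (0:ℝ) T
      · rw [Set.indicator_of_mem hs, Set.indicator_of_mem hs,
          ENNReal.ofReal_rpow_of_nonneg (Real.exp_pos _).le hr.le]
        congr 1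
        rw [Real.rpow_def_of_pos (Real.exp_pos _), Real.log_exp]
        congr 1
        ring
      · rw [Set.indicator_of_notMem hs, Set.indicator_of_notMem hs]
        exact ENNReal.zero_rpow_of_pos hr
    simp_rw [hpt]
    rw [lintegral_indicator measurableSet_Icc,
      ← setLIntegral_congr (Ioc_ae_eq_Icc (α := ℝ) (μ := volume)),
      exp_lmoment (r*l) T (by positivity) hT.le]
  -- data norm
  have hBle : (∫⁻ τ, H τ ^ (2:ℝ)) ^ (1/2:ℝ) ≤ eLpNorm f 2 μT + eLpNorm g 2 μT := by
    have h1 : ∀ τ, H τ ^ (2:ℝ)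
        = Set.indicator (Set.Ioc 0 T) (fun τ => ENNReal.ofReal (h' τ) ^ (2:ℝ)) τ := by
      intro τ
      rw [hHdef]
      by_cases hτ : τ ∈ Set.Ioc (0:ℝ) T
      · rw [Set.indicator_of_mem hτ, Set.indicator_of_mem hτ]
      · rw [Set.indicator_of_notMem hτ, Set.indicator_of_notMem hτ]
        exact ENNReal.zero_rpow_of_pos two_pos
    have h2 : (∫⁻ τ, H τ ^ (2:ℝ)) = ∫⁻ τ in Set.Ioc 0 T, ENNReal.ofReal (h' τ) ^ (2:ℝ) := by
      simp_rw [h1]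
      exact lintegral_indicator measurableSet_Ioc _
    have h3 : ∫⁻ τ in Set.Ioc 0 T, ENNReal.ofReal (h' τ) ^ (2:ℝ)
        ≤ ∫⁻ τ in Set.Ioc 0 T, (‖h' τ‖₊ : ℝ≥0∞) ^ (2:ℝ) :=
      lintegral_mono fun τ => ENNReal.rpow_le_rpow (Real.ofReal_le_enorm _) (by norm_num)
    have h4 : eLpNorm (fun τ => f τ + g τ) 2 μT
        = (∫⁻ τ in Set.Ioc 0 T, (‖h' τ‖₊ : ℝ≥0∞) ^ (2:ℝ)) ^ (1/2:ℝ) := by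
      rw [eLpNorm_congr_ae h'ae, eLpNorm_eq_lintegral_rpow_enorm_toReal (by norm_num) (by norm_num)]
      norm_num [hμT]
      rfl
    calc (∫⁻ τ, H τ ^ (2:ℝ)) ^ (1/2:ℝ)
        ≤ (∫⁻ τ in Set.Ioc 0 T, (‖h' τ‖₊ : ℝ≥0∞) ^ (2:ℝ)) ^ (1/2:ℝ) :=
          ENNReal.rpow_le_rpow (h2 ▸ h3) (by norm_num)
      _ = eLpNorm (fun τ => f τ + g τ) 2 μT := h4.symm
      _ ≤ eLpNorm f 2 μT + eLpNorm g 2 μT :=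
          eLpNorm_add_le hf.aestronglyMeasurable hg.aestronglyMeasurable one_le_two

  by_cases hptop : p = ∞
  · -- p = ∞, q = 2
    have hq2' : q = 2 := by
      have h6 : 1/q = 1/2 := by rw [hq_inv, hptop]; simp
      have h7 := congrArg (fun x : ℝ≥0∞ => x⁻¹) h6
      simpa [one_div] using h7
    subst hq2'
    subst hptop
    have hnum2 : (0:ℝ) ≤ 1 - Real.exp (-(2*l*T)) := by
      have h8 : Real.exp (-(2*l*T)) ≤ 1 := by
        rw [Real.exp_le_one_iff]
        have := mul_pos hl hT
        linarith
      linarith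
    have hcoef2 : (0:ℝ) ≤ (1 - Real.exp (-(2*l*T)))/(2*l) := div_nonneg hnum2 (by positivity)
    have hCS : ∀ t : ℝ, (∫⁻ τ, κ (t - τ) * H τ)
        ≤ (∫⁻ s, κ s ^ (2:ℝ)) ^ (1/2:ℝ) * (∫⁻ τ, H τ ^ (2:ℝ)) ^ (1/2:ℝ) := by
      intro t
      have hconj : Real.HolderConjugate 2 2 := ⟨by norm_num, by norm_num, by norm_num⟩
      have hmeas1 : AEMeasurable (fun τ => κ (t - τ)) volume :=
        (hκm.comp (measurable_const.sub measurable_id)).aemeasurable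
      have h8 := ENNReal.lintegral_mul_le_Lp_mul_Lq volume hconj hmeas1 hHm.aemeasurable
      have htr : (∫⁻ τ, κ (t - τ) ^ (2:ℝ)) = ∫⁻ s, κ s ^ (2:ℝ) :=
        (Measure.measurePreserving_sub_left volume t).lintegral_comp (hκm.pow_const 2)
      rwa [htr] at h8
    have key : ∀ᵐ t ∂μT, (‖a t‖₊ : ℝ≥0∞) ≤ ENNReal.ofReal (a 0)
        + ENNReal.ofReal (((1 - Real.exp (-((2:ℝ≥0∞).toReal * c * (2:ℝ)^(2*j) * T))) /
            ((2:ℝ≥0∞).toReal * c * (2:ℝ)^(2*j))) ^ (1 / (2:ℝ≥0∞).toReal)) *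
          (eLpNorm f 2 μT + eLpNorm g 2 μT) := by
      have hmem : ∀ᵐ t ∂μT, t ∈ Set.Ioc (0:ℝ) T := by
        rw [hμT]; exact ae_restrict_mem measurableSet_Ioc
      filter_upwards [hmem] with t ht
      rw [show (‖a t‖₊ : ℝ≥0∞) = ‖a t‖ₑ from rfl, Real.enorm_eq_ofReal (ha_nonneg t ⟨ht.1.le, ht.2⟩)]
      refine le_trans (hptwise t ht) (add_le_add ?_ ?_)
      · apply ENNReal.ofReal_le_ofReal
        have hexp : Real.exp (-(l*t)) ≤ 1 := by
          rw [Real.exp_le_one_iff]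
          nlinarith [mul_nonneg hl.le ht.1.le]
        exact mul_le_of_le_one_left ha0 hexp
      · calc (∫⁻ τ, κ (t - τ) * H τ)
            ≤ (∫⁻ s, κ s ^ (2:ℝ)) ^ (1/2:ℝ) * (∫⁻ τ, H τ ^ (2:ℝ)) ^ (1/2:ℝ) := hCS t
          _ ≤ ENNReal.ofReal (((1 - Real.exp (-((2:ℝ≥0∞).toReal * c * (2:ℝ)^(2*j) * T))) /
                ((2:ℝ≥0∞).toReal * c * (2:ℝ)^(2*j))) ^ (1 / (2:ℝ≥0∞).toReal)) *
              (eLpNorm f 2 μT + eLpNorm g 2 μT) := by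
            apply mul_le_mul' _ hBle
            rw [hcoef 2 two_pos, ENNReal.ofReal_rpow_of_nonneg hcoef2 (by norm_num)]
            apply le_of_eq
            congr 1
            rw [hldef]
            norm_num [ENNReal.toReal_ofNat]
            ring_nf
    have hbound : eLpNorm a ⊤ μT ≤ ENNReal.ofReal (a 0)
        + ENNReal.ofReal (((1 - Real.exp (-((2:ℝ≥0∞).toReal * c * (2:ℝ)^(2*j) * T))) /
            ((2:ℝ≥0∞).toReal * c * (2:ℝ)^(2*j))) ^ (1 / (2:ℝ≥0∞).toReal)) *
          (eLpNorm f 2 μT + eLpNorm g 2 μT) := by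
      rw [eLpNorm_exponent_top]
      exact essSup_le_of_ae_le _ key
    refine le_trans hbound (le_of_eq ?_)
    congr 2
    simp [ENNReal.toReal_top]
  · -- finite p
    have hpr2 : 2 ≤ p.toReal := by
      have := ENNReal.toReal_mono hptop hp
      simpa using this
    have hpr0 : (0:ℝ) < p.toReal := by linarith
    have hqr0 : (0:ℝ) < q.toReal := by linarith
    have hqrel : 1/q.toReal = 1/2 + 1/p.toReal := by
      have h5 := congrArg ENNReal.toReal hq_inv
      rw [ENNReal.toReal_add (by norm_num) (by simp [one_div, ENNReal.inv_ne_top, hp0])] at h5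
      simp only [one_div, ENNReal.toReal_inv] at h5
      norm_num at h5
      simp only [one_div]
      rw [h5]
      norm_num
    have hnumP : (0:ℝ) ≤ 1 - Real.exp (-(p.toReal*l*T)) := by
      have h8 : Real.exp (-(p.toReal*l*T)) ≤ 1 := by
        rw [Real.exp_le_one_iff]
        have := mul_pos (mul_pos hpr0 hl) hT
        linarith
      linarith
    have hcoefP : (0:ℝ) ≤ (1 - Real.exp (-(p.toReal*l*T)))/(p.toReal*l) :=
      div_nonneg hnumP (by positivity)
    have hnumQ : (0:ℝ) ≤ 1 - Real.exp (-(q.toReal*l*T)) := by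
      have h8 : Real.exp (-(q.toReal*l*T)) ≤ 1 := by
        rw [Real.exp_le_one_iff]
        have := mul_pos (mul_pos hqr0 hl) hT
        linarith
      linarith
    have hcoefQ : (0:ℝ) ≤ (1 - Real.exp (-(q.toReal*l*T)))/(q.toReal*l) :=
      div_nonneg hnumQ (by positivity)
    have hvm : Measurable (fun t : ℝ => ∫⁻ τ, κ (t - τ) * H τ) := by
      apply Measurable.lintegral_prod_right' (f := fun z : ℝ × ℝ => κ (z.1 - z.2) * H z.2)
      exact (hκm.comp (measurable_fst.sub measurable_snd)).mul (hHm.comp measurable_snd)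
    have hum : Measurable (fun t : ℝ => ENNReal.ofReal (Real.exp (-(l*t)) * a 0)) :=
      ENNReal.measurable_ofReal.comp (hKcont.mul continuous_const).measurable
    rw [eLpNorm_eq_lintegral_rpow_enorm_toReal hp0 hptop]
    have hstep1 : ∫⁻ t, (‖a t‖₊ : ℝ≥0∞) ^ p.toReal ∂μT
        ≤ ∫⁻ t, ((fun t => ENNReal.ofReal (Real.exp (-(l*t)) * a 0))
            + (fun t => ∫⁻ τ, κ (t - τ) * H τ)) t ^ p.toReal ∂μT := by
      have hmem : ∀ᵐ t ∂μT, t ∈ Set.Ioc (0:ℝ) T := by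
        rw [hμT]; exact ae_restrict_mem measurableSet_Ioc
      apply lintegral_mono_ae
      filter_upwards [hmem] with t ht
      apply ENNReal.rpow_le_rpow _ hpr0.le
      rw [show (‖a t‖₊ : ℝ≥0∞) = ‖a t‖ₑ from rfl, Real.enorm_eq_ofReal (ha_nonneg t ⟨ht.1.le, ht.2⟩)]
      exact hptwise t ht
    have hmink := ENNReal.lintegral_Lp_add_le (μ := μT)
      hum.aemeasurable hvm.aemeasurable (by linarith : (1:ℝ) ≤ p.toReal)
    have hterm1 : (∫⁻ t, (ENNReal.ofReal (Real.exp (-(l*t)) * a 0)) ^ p.toReal ∂μT) ^ (1/p.toReal)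
        = ENNReal.ofReal (((1 - Real.exp (-(p.toReal * c * (2:ℝ)^(2*j) * T))) /
            (p.toReal * c * (2:ℝ)^(2*j))) ^ (1 / p.toReal) * a 0) := by
      have hptw : ∀ t : ℝ, (ENNReal.ofReal (Real.exp (-(l*t)) * a 0)) ^ p.toReal
          = ENNReal.ofReal (Real.exp (-(p.toReal*l*t))) * ENNReal.ofReal ((a 0)^p.toReal) := by
        intro t
        rw [ENNReal.ofReal_mul (Real.exp_pos _).le,
          ENNReal.mul_rpow_of_nonneg _ _ hpr0.le,
          ENNReal.ofReal_rpow_of_nonneg (Real.exp_pos _).le hpr0.le,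
          ENNReal.ofReal_rpow_of_nonneg ha0 hpr0.le]
        congr 2
        rw [Real.rpow_def_of_pos (Real.exp_pos _), Real.log_exp]
        congr 1
        ring
      simp_rw [hptw]
      rw [hμT, lintegral_mul_const' _ _ ENNReal.ofReal_ne_top,
        exp_lmoment (p.toReal*l) T (by positivity) hT.le,
        ENNReal.mul_rpow_of_nonneg _ _ (by positivity),
        ENNReal.ofReal_rpow_of_nonneg hcoefP (by positivity),
        ENNReal.ofReal_rpow_of_nonneg (by positivity : (0:ℝ) ≤ (a 0)^p.toReal) (by positivity),
        ← Real.rpow_mul ha0, mul_one_div_cancel hpr0.ne', Real.rpow_one,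
        ← ENNReal.ofReal_mul (by positivity)]
      congr 2
      rw [hldef]
      ring_nf
    have hterm2 : (∫⁻ t, (∫⁻ τ, κ (t - τ) * H τ) ^ p.toReal ∂μT) ^ (1/p.toReal)
        ≤ ENNReal.ofReal (((1 - Real.exp (-(q.toReal * c * (2:ℝ)^(2*j) * T))) /
            (q.toReal * c * (2:ℝ)^(2*j))) ^ (1 / q.toReal)) *
          (eLpNorm f 2 μT + eLpNorm g 2 μT) := by
      have hy := young_conv κ H hκm hHm hHt hpr2 hqr1 hqrel
      have hres : (∫⁻ t, (∫⁻ τ, κ (t - τ) * H τ) ^ p.toReal ∂μT)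
          ≤ ∫⁻ t, (∫⁻ τ, κ (t - τ) * H τ) ^ p.toReal := by
        rw [hμT]
        exact lintegral_mono' Measure.restrict_le_self le_rfl
      calc (∫⁻ t, (∫⁻ τ, κ (t - τ) * H τ) ^ p.toReal ∂μT) ^ (1/p.toReal)
          ≤ (∫⁻ t, (∫⁻ τ, κ (t - τ) * H τ) ^ p.toReal) ^ (1/p.toReal) :=
            ENNReal.rpow_le_rpow hres (by positivity)
        _ ≤ (∫⁻ s, κ s ^ q.toReal) ^ (1/q.toReal) * (∫⁻ τ, H τ ^ (2:ℝ)) ^ (1/2:ℝ) := hy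
        _ ≤ ENNReal.ofReal (((1 - Real.exp (-(q.toReal * c * (2:ℝ)^(2*j) * T))) /
              (q.toReal * c * (2:ℝ)^(2*j))) ^ (1 / q.toReal)) *
            (eLpNorm f 2 μT + eLpNorm g 2 μT) := by
            apply mul_le_mul' _ hBle
            rw [hcoef q.toReal hqr0, ENNReal.ofReal_rpow_of_nonneg hcoefQ (by positivity)]
            apply le_of_eq
            congr 2
            rw [hldef]
            ring_nf
    calc (∫⁻ t, (‖a t‖₊ : ℝ≥0∞) ^ p.toReal ∂μT) ^ (1/p.toReal)
        ≤ (∫⁻ t, ((fun t => ENNReal.ofReal (Real.exp (-(l*t)) * a 0))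
            + (fun t => ∫⁻ τ, κ (t - τ) * H τ)) t ^ p.toReal ∂μT) ^ (1/p.toReal) :=
          ENNReal.rpow_le_rpow hstep1 (by positivity)
      _ ≤ (∫⁻ t, (ENNReal.ofReal (Real.exp (-(l*t)) * a 0)) ^ p.toReal ∂μT) ^ (1/p.toReal)
          + (∫⁻ t, (∫⁻ τ, κ (t - τ) * H τ) ^ p.toReal ∂μT) ^ (1/p.toReal) := hmink
      _ ≤ _ := by
          rw [hterm1]
          exact add_le_add_right hterm2 _
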